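/- arXiv:0811.0643 — 2 statements merged into one kernel-verified Lean document; each statement's English description precedes it below -/
import Mathlib

section
/- Suppose σ : ℝ → ℝ satisfies |σ(z)| ≤ C_σ|z| + C̃_σ for all z ∈ ℝ with finite constants C_σ, C̃_σ, the initial data u_0 : ℤ^d → ℝ is bounded, and the (deterministic) forcing ξ = {ξ_n(x)} satisfies C_ξ := sup_{n≥0} sup_{x∈ℤ^d} |ξ_n(x)| < ∞. Then the (unique, recursively defined) solution u of the discrete heat equation u_{n+1}(x) = (𝒫u_n)(x) + σ(u_n(x))ξ_n(x) satisfies limsup_{n→∞} (1/n) sup_{x∈ℤ^d} ln |u_n(x)| ≤ ln(1 + C_σ·C_ξ). -/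
open Filter Real

noncomputable section

/-- Transition operator of the random walk on `ℤ^d` with step distribution `p`. -/
def transOp {d : ℕ} (p : (Fin d → ℤ) → ℝ) (h : (Fin d → ℤ) → ℝ) (x : Fin d → ℤ) : ℝ :=
  ∑' y : Fin d → ℤ, p (y - x) * h y

open scoped Topology

/-!
The averaging operator `𝒫` does not increase the sup norm, so a solution started from data
bounded by `D` satisfies `sup_x |u_n(x)| ≤ M_n` with `M_{n+1} = (1 + C_σ C_ξ) M_n + C̃_σ C_ξ`.
Hence `M_n ≤ (D + C̃_σ C_ξ n)(1 + C_σ C_ξ)ⁿ`, and the polynomial prefactor disappears in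
`(1/n) log M_n → log (1 + C_σ C_ξ)`.
-/

theorem nonneg_of_abs_le_mul_abs_add {f : ℝ → ℝ} {a b : ℝ} (h : ∀ z, |f z| ≤ a * |z| + b) :
    0 ≤ a ∧ 0 ≤ b := by
  have hb : 0 ≤ b := by simpa using (abs_nonneg _).trans (h 0)
  refine ⟨?_, hb⟩
  by_contra! ha
  have hz : 0 < (b + 1) / (-a) := div_pos (by linarith) (by linarith)
  have key := (abs_nonneg _).trans (h ((b + 1) / (-a)))
  have hval : a * ((b + 1) / (-a)) = -(b + 1) := by
    have := ha.ne
    field_simp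
  rw [abs_of_pos hz, hval] at key
  linarith

theorem abs_transOp_le {d : ℕ} {p h : (Fin d → ℤ) → ℝ} {M : ℝ} (hp_nonneg : ∀ x, 0 ≤ p x)
    (hp_sum : ∑' x, p x = 1) (hh : ∀ y, |h y| ≤ M) (x : Fin d → ℤ) :
    |transOp p h x| ≤ M := by
  have hp : Summable p := by
    by_contra hp
    simp [tsum_eq_zero_of_not_summable hp] at hp_sum
  have hp_shift : HasSum (fun y => p (y - x)) 1 :=
    (Equiv.subRight x).hasSum_iff.mpr (hp_sum ▸ hp.hasSum)
  have := tsum_of_norm_bounded (f := fun y => p (y - x) * h y) (hp_shift.mul_right M) fun y => by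
    rw [norm_mul, Real.norm_of_nonneg (hp_nonneg _)]
    exact mul_le_mul_of_nonneg_left (hh y) (hp_nonneg _)
  simpa [transOp] using this

theorem abs_transOp_add_mul_le {d : ℕ} {p h ξ : (Fin d → ℤ) → ℝ} {σ : ℝ → ℝ}
    {Cσ C'σ Cξ M : ℝ} (hp_nonneg : ∀ x, 0 ≤ p x) (hp_sum : ∑' x, p x = 1)
    (hσ : ∀ z, |σ z| ≤ Cσ * |z| + C'σ) (hCσ : 0 ≤ Cσ) (hξ : ∀ x, |ξ x| ≤ Cξ)
    (hh : ∀ y, |h y| ≤ M) (x : Fin d → ℤ) :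
    |transOp p h x + σ (h x) * ξ x| ≤ (1 + Cσ * Cξ) * M + C'σ * Cξ := by
  have hσM : |σ (h x)| ≤ Cσ * M + C'σ := (hσ _).trans (by gcongr; exact hh x)
  calc |transOp p h x + σ (h x) * ξ x|
      ≤ |transOp p h x| + |σ (h x)| * |ξ x| := by rw [← abs_mul]; exact abs_add_le _ _
    _ ≤ M + (Cσ * M + C'σ) * Cξ :=
        add_le_add (abs_transOp_le hp_nonneg hp_sum hh x)
          (mul_le_mul hσM (hξ x) (abs_nonneg _) ((abs_nonneg _).trans hσM))
    _ = (1 + Cσ * Cξ) * M + C'σ * Cξ := by ring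

theorem abs_heat_le {d : ℕ} {p : (Fin d → ℤ) → ℝ} {σ : ℝ → ℝ} {Cσ C'σ Cξ D : ℝ}
    {ξ u : ℕ → (Fin d → ℤ) → ℝ} (hp_nonneg : ∀ x, 0 ≤ p x) (hp_sum : ∑' x, p x = 1)
    (hσ : ∀ z, |σ z| ≤ Cσ * |z| + C'σ) (hξ : ∀ n x, |ξ n x| ≤ Cξ) (hu₀ : ∀ x, |u 0 x| ≤ D)
    (hu_rec : ∀ n x, u (n + 1) x = transOp p (u n) x + σ (u n x) * ξ n x) (n : ℕ)
    (x : Fin d → ℤ) :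
    |u n x| ≤ (D + C'σ * Cξ * n) * (1 + Cσ * Cξ) ^ n := by
  obtain ⟨hCσ, hC'σ⟩ := nonneg_of_abs_le_mul_abs_add hσ
  have hCξ : 0 ≤ Cξ := (abs_nonneg _).trans (hξ 0 0)
  have hq : 1 ≤ 1 + Cσ * Cξ := le_add_of_nonneg_right (mul_nonneg hCσ hCξ)
  induction n generalizing x with
  | zero => simpa using hu₀ x
  | succ n ih =>
    rw [hu_rec]
    refine (abs_transOp_add_mul_le hp_nonneg hp_sum hσ hCσ (hξ n) ih x).trans ?_
    have : C'σ * Cξ ≤ C'σ * Cξ * (1 + Cσ * Cξ) ^ (n + 1) :=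
      le_mul_of_one_le_right (mul_nonneg hC'σ hCξ) (one_le_pow₀ hq)
    push_cast
    linear_combination this

theorem tendsto_inv_mul_log_add_mul {D c : ℝ} (hD : 0 < D) (hc : 0 ≤ c) :
    Tendsto (fun n : ℕ => (n : ℝ)⁻¹ * log (D + c * n)) atTop (𝓝 0) := by
  have hlog : Tendsto (fun n : ℕ => log n / n) atTop (𝓝 0) :=
    (by simpa using tendsto_pow_log_div_mul_add_atTop 1 0 1 one_ne_zero :
      Tendsto (fun x : ℝ => log x / x) atTop (𝓝 0)).comp tendsto_natCast_atTop_atTop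
  refine tendsto_of_tendsto_of_tendsto_of_le_of_le' (tendsto_const_div_atTop_nhds_zero_nat (log D))
    (by simpa using (tendsto_const_div_atTop_nhds_zero_nat (log (D + c))).add hlog) ?_ ?_
  · filter_upwards with n
    rw [inv_mul_eq_div]
    gcongr
    · exact le_add_of_nonneg_right (by positivity)
  · filter_upwards [eventually_ge_atTop 1] with n hn
    have hn : (1 : ℝ) ≤ n := by exact_mod_cast hn
    calc (n : ℝ)⁻¹ * log (D + c * n) ≤ (n : ℝ)⁻¹ * log ((D + c) * n) := by
          gcongr
          nlinarith
      _ = log (D + c) / n + log n / n := by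
          rw [log_mul (by positivity) (by positivity)]
          ring

theorem tendsto_inv_mul_log_add_mul_mul_pow {D c q : ℝ} (hD : 0 < D) (hc : 0 ≤ c)
    (hq : 0 < q) :
    Tendsto (fun n : ℕ => (n : ℝ)⁻¹ * log ((D + c * n) * q ^ n)) atTop (𝓝 (log q)) := by
  have h := (tendsto_inv_mul_log_add_mul hD hc).add_const (log q)
  rw [zero_add] at h
  refine h.congr' ?_
  filter_upwards [eventually_ne_atTop 0] with n hn
  rw [log_mul (by positivity) (by positivity), log_pow]
  field_simp

theorem limsup_inv_mul_iSup_log_abs_le {ι : Type*} {v : ℕ → ι → ℝ} {b : ℕ → ℝ} {L : ℝ}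
    (hb : ∀ n, 1 ≤ b n) (hv : ∀ n x, |v n x| ≤ b n)
    (hlim : Tendsto (fun n : ℕ => (n : ℝ)⁻¹ * log (b n)) atTop (𝓝 L)) :
    limsup (fun n : ℕ => (((n : ℝ)⁻¹ : ℝ) : EReal) * ⨆ x, ((log |v n x| : ℝ) : EReal)) atTop
      ≤ (L : EReal) := by
  -- `log 0 = 0`, so the bound `log |v| ≤ log b` at zeros of `v` needs `1 ≤ b`
  have hlog : ∀ n x, log |v n x| ≤ log (b n) := fun n x => by
    rcases (abs_nonneg (v n x)).eq_or_lt with h | h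
    · rw [← h, log_zero]
      exact log_nonneg (hb n)
    · exact log_le_log h (hv n x)
  calc _ ≤ limsup (fun n : ℕ => (((n : ℝ)⁻¹ * log (b n) : ℝ) : EReal)) atTop := by
        refine limsup_le_limsup (.of_forall fun n => ?_)
        dsimp only
        rw [EReal.coe_mul]
        gcongr
        exact iSup_le fun x => EReal.coe_le_coe (hlog n x)
    _ = L := ((continuous_coe_real_ereal.tendsto L).comp hlim).limsup_eq

theorem discrete_heat_deterministic_growth_general
    {d : ℕ}
    (p : (Fin d → ℤ) → ℝ) (hp_nonneg : ∀ x, 0 ≤ p x)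
    (hp_sum : ∑' x : Fin d → ℤ, p x = 1)
    (σ : ℝ → ℝ) (Cσ C'σ : ℝ)
    (hσ : ∀ z : ℝ, |σ z| ≤ Cσ * |z| + C'σ)
    (u₀ : (Fin d → ℤ) → ℝ) (hu₀_bdd : ∃ B : ℝ, ∀ x, |u₀ x| ≤ B)
    (ξ : ℕ → (Fin d → ℤ) → ℝ)
    (Cξ : ℝ) (hCξ : ∀ n x, |ξ n x| ≤ Cξ)
    (u : ℕ → (Fin d → ℤ) → ℝ)
    (hu_init : ∀ x, u 0 x = u₀ x)
    (hu_rec : ∀ n x, u (n + 1) x = transOp p (u n) x + σ (u n x) * ξ n x) :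
    limsup (fun n : ℕ =>
        (((n : ℝ)⁻¹ : ℝ) : EReal) *
          ⨆ x : Fin d → ℤ, ((Real.log |u n x| : ℝ) : EReal)) atTop
      ≤ ((Real.log (1 + Cσ * Cξ) : ℝ) : EReal) := by
  obtain ⟨B, hB⟩ := hu₀_bdd
  obtain ⟨hCσ, hC'σ⟩ := nonneg_of_abs_le_mul_abs_add hσ
  have hCξ₀ : 0 ≤ Cξ := (abs_nonneg _).trans (hCξ 0 0)
  have hq : 1 ≤ 1 + Cσ * Cξ := le_add_of_nonneg_right (mul_nonneg hCσ hCξ₀)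
  have hu₀ : ∀ x, |u 0 x| ≤ max B 1 := fun x => hu_init x ▸ (hB x).trans (le_max_left _ _)
  refine limsup_inv_mul_iSup_log_abs_le (fun n => ?_)
    (abs_heat_le hp_nonneg hp_sum hσ hCξ hu₀ hu_rec)
    (tendsto_inv_mul_log_add_mul_mul_pow (by positivity) (by positivity) (by positivity))
  exact one_le_mul_of_one_le_of_one_le
    (le_add_of_le_of_nonneg (le_max_right _ _) (by positivity)) (one_le_pow₀ hq)

/-- **Lemma 3.1.**  If `|σ(z)| ≤ C_σ|z| + C̃_σ`, `u₀` is bounded, and the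
(deterministic) forcing satisfies `sup_{n,x}|ξ_n(x)| ≤ C_ξ < ∞`, then the solution of
`u_{n+1}(x) = (𝒫u_n)(x) + σ(u_n(x))ξ_n(x)` satisfies
`limsup_n (1/n) sup_x ln|u_n(x)| ≤ ln(1 + C_σ C_ξ)`. -/
theorem discrete_heat_deterministic_growth
    {d : ℕ} (hd : 1 ≤ d)
    (p : (Fin d → ℤ) → ℝ) (hp_nonneg : ∀ x, 0 ≤ p x) (hp_le : ∀ x, p x ≤ 1)
    (hp_sum : ∑' x : Fin d → ℤ, p x = 1)
    (σ : ℝ → ℝ) (Cσ C'σ : ℝ)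
    (hσ : ∀ z : ℝ, |σ z| ≤ Cσ * |z| + C'σ)
    (u₀ : (Fin d → ℤ) → ℝ) (hu₀_bdd : ∃ B : ℝ, ∀ x, |u₀ x| ≤ B)
    (ξ : ℕ → (Fin d → ℤ) → ℝ)
    (Cξ : ℝ) (hCξ : ∀ n x, |ξ n x| ≤ Cξ)
    (u : ℕ → (Fin d → ℤ) → ℝ)
    (hu_init : ∀ x, u 0 x = u₀ x)
    (hu_rec : ∀ n x, u (n + 1) x = transOp p (u n) x + σ (u n x) * ξ n x) :
    limsup (fun n : ℕ =>
        (((n : ℝ)⁻¹ : ℝ) : EReal) *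
          ⨆ x : Fin d → ℤ, ((Real.log |u n x| : ℝ) : EReal)) atTop
      ≤ ((Real.log (1 + Cσ * Cξ) : ℝ) : EReal) :=
  discrete_heat_deterministic_growth_general p hp_nonneg hp_sum σ Cσ C'σ hσ u₀ hu₀_bdd ξ Cξ hCξ u
    hu_init hu_rec
end
end

section
/- Let σ : ℝ → ℝ be Lipschitz with Lipschitz constant Lip_σ, and let the forcing satisfy C_ξ := sup_{n≥0} sup_{x∈ℤ^d} |ξ_n(x)| < ∞ together with p(0) ≥ C_ξ·Lip_σ. Let u and v be the solutions of the discrete heat equation u_{n+1}(x) = (𝒫u_n)(x) + σ(u_n(x))ξ_n(x) (same σ and same ξ) with respective initial data u_0 and v_0. If u_0(x) ≥ v_0(x) for all x ∈ ℤ^d, then u_n(x) ≥ v_n(x) for all n ≥ 0 and x ∈ ℤ^d. -/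
open Filter Real

noncomputable section

/-- **Theorem 3.5 (comparison principle).**  If `sup_{n,x}|ξ_n(x)| ≤ C_ξ` and
`p(0) ≥ C_ξ·Lip_σ`, then solutions of the discrete heat equation with the same noise
and diffusion coefficient are ordered whenever their initial data are: `u₀ ≥ v₀`
implies `u_n ≥ v_n` for all `n`. -/
theorem discrete_heat_comparison
    {d : ℕ} (hd : 1 ≤ d)
    (p : (Fin d → ℤ) → ℝ) (hp_nonneg : ∀ x, 0 ≤ p x) (hp_le : ∀ x, p x ≤ 1)
    (hp_sum : ∑' x : Fin d → ℤ, p x = 1)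
    (σ : ℝ → ℝ) (Lipσ : ℝ)
    (hLip : ∀ x y : ℝ, |σ x - σ y| ≤ Lipσ * |x - y|)
    (ξ : ℕ → (Fin d → ℤ) → ℝ)
    (Cξ : ℝ) (hCξ : ∀ n x, |ξ n x| ≤ Cξ)
    (hcomp : Cξ * Lipσ ≤ p 0)
    (u₀ v₀ : (Fin d → ℤ) → ℝ)
    (hu₀_bdd : ∃ B : ℝ, ∀ x, |u₀ x| ≤ B) (hv₀_bdd : ∃ B : ℝ, ∀ x, |v₀ x| ≤ B)
    (u v : ℕ → (Fin d → ℤ) → ℝ)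
    (hu_init : ∀ x, u 0 x = u₀ x)
    (hu_rec : ∀ n x, u (n + 1) x = transOp p (u n) x + σ (u n x) * ξ n x)
    (hv_init : ∀ x, v 0 x = v₀ x)
    (hv_rec : ∀ n x, v (n + 1) x = transOp p (v n) x + σ (v n x) * ξ n x)
    (h₀ : ∀ x, v₀ x ≤ u₀ x) :
    ∀ n x, v n x ≤ u n x := by

  classical
  have hLip0 : 0 ≤ Lipσ := by
    have h1 := hLip 1 0
    have h2 := abs_nonneg (σ 1 - σ 0)
    simp at h1
    linarith
  have hC0 : 0 ≤ Cξ := le_trans (abs_nonneg _) (hCξ 0 (fun _ => 0))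
  have hpS : Summable p := by
    by_contra h
    rw [tsum_eq_zero_of_not_summable h] at hp_sum
    norm_num at hp_sum
  have hshiftS : ∀ z : Fin d → ℤ, Summable (fun y => p (y - z)) := fun z =>
    ((Equiv.subRight z).summable_iff).mpr hpS
  have hshift_sum : ∀ z : Fin d → ℤ, ∑' y, p (y - z) = 1 := fun z => by
    rw [← hp_sum]
    exact (Equiv.subRight z).tsum_eq p
  have hmulS : ∀ (h : (Fin d → ℤ) → ℝ) (B : ℝ), (∀ y, |h y| ≤ B) →
      ∀ z, Summable (fun y => p (y - z) * h y) := by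
    intro h B hB z
    have habs : Summable (fun y => |p (y - z) * h y|) := by
      refine Summable.of_nonneg_of_le (fun _ => abs_nonneg _) (fun y => ?_)
        ((hshiftS z).mul_right B)
      rw [abs_mul, abs_of_nonneg (hp_nonneg _)]
      exact mul_le_mul_of_nonneg_left (hB y) (hp_nonneg _)
    exact habs.of_abs
  have htrans_bd : ∀ (h : (Fin d → ℤ) → ℝ) (B : ℝ), (∀ y, |h y| ≤ B) →
      ∀ z, |transOp p h z| ≤ B := by
    intro h B hB z
    have h1 : |transOp p h z| ≤ ∑' y, |p (y - z) * h y| := by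
      have := norm_tsum_le_tsum_norm (f := fun y => p (y - z) * h y) (by
        refine Summable.of_nonneg_of_le (fun _ => norm_nonneg _) (fun y => ?_)
          ((hshiftS z).mul_right B)
        rw [norm_mul, Real.norm_eq_abs, Real.norm_eq_abs, abs_of_nonneg (hp_nonneg _)]
        exact mul_le_mul_of_nonneg_left (hB y) (hp_nonneg _))
      simpa only [transOp, Real.norm_eq_abs] using this
    have h2 : ∑' y, |p (y - z) * h y| ≤ ∑' y, p (y - z) * B := by
      refine Summable.tsum_le_tsum (fun y => ?_) ?_ ((hshiftS z).mul_right B)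
      · rw [abs_mul, abs_of_nonneg (hp_nonneg _)]
        exact mul_le_mul_of_nonneg_left (hB y) (hp_nonneg _)
      · refine Summable.of_nonneg_of_le (fun _ => abs_nonneg _) (fun y => ?_)
          ((hshiftS z).mul_right B)
        rw [abs_mul, abs_of_nonneg (hp_nonneg _)]
        exact mul_le_mul_of_nonneg_left (hB y) (hp_nonneg _)
    have h3 : ∑' y, p (y - z) * B = B := by
      rw [tsum_mul_right, hshift_sum z, one_mul]
    linarith
  have hσbd : ∀ t : ℝ, |σ t| ≤ |σ 0| + Lipσ * |t| := by
    intro t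
    have := hLip t 0
    have h2 := abs_sub_abs_le_abs_sub (σ t) (σ 0)
    simp only [sub_zero] at this
    linarith
  have key : ∀ m, (∃ B, ∀ y, |u m y| ≤ B ∧ |v m y| ≤ B) ∧ ∀ y, v m y ≤ u m y := by
    intro m
    induction m with
    | zero =>
      obtain ⟨B₁, hB₁⟩ := hu₀_bdd
      obtain ⟨B₂, hB₂⟩ := hv₀_bdd
      refine ⟨⟨max B₁ B₂, fun y => ?_⟩, fun y => by rw [hu_init, hv_init]; exact h₀ y⟩
      rw [hu_init, hv_init]
      exact ⟨le_trans (hB₁ y) (le_max_left _ _), le_trans (hB₂ y) (le_max_right _ _)⟩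
    | succ k ih =>
      obtain ⟨⟨B, hB⟩, hle⟩ := ih
      have hBnn : 0 ≤ B := le_trans (abs_nonneg _) (hB (fun _ => 0)).1
      have hBu : ∀ y, |u k y| ≤ B := fun y => (hB y).1
      have hBv : ∀ y, |v k y| ≤ B := fun y => (hB y).2
      have hSu : ∀ z, Summable (fun y => p (y - z) * u k y) := hmulS _ B hBu
      have hSv : ∀ z, Summable (fun y => p (y - z) * v k y) := hmulS _ B hBv
      constructor
      · refine ⟨B + (|σ 0| + Lipσ * B) * Cξ, fun y => ?_⟩
        have hσu : |σ (u k y)| ≤ |σ 0| + Lipσ * B := by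
          have := hσbd (u k y)
          have h2 : Lipσ * |u k y| ≤ Lipσ * B := mul_le_mul_of_nonneg_left (hBu y) hLip0
          linarith
        have hσv : |σ (v k y)| ≤ |σ 0| + Lipσ * B := by
          have := hσbd (v k y)
          have h2 : Lipσ * |v k y| ≤ Lipσ * B := mul_le_mul_of_nonneg_left (hBv y) hLip0
          linarith
        have hσnn : (0:ℝ) ≤ |σ 0| + Lipσ * B := le_trans (abs_nonneg _) hσu
        constructor
        · rw [hu_rec]
          calc |transOp p (u k) y + σ (u k y) * ξ k y|
              ≤ |transOp p (u k) y| + |σ (u k y) * ξ k y| := abs_add_le _ _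
            _ ≤ B + (|σ 0| + Lipσ * B) * Cξ := by
                have h1 := htrans_bd _ B hBu y
                have h2 : |σ (u k y) * ξ k y| ≤ (|σ 0| + Lipσ * B) * Cξ := by
                  rw [abs_mul]
                  exact mul_le_mul hσu (hCξ k y) (abs_nonneg _) hσnn
                linarith
        · rw [hv_rec]
          calc |transOp p (v k) y + σ (v k y) * ξ k y|
              ≤ |transOp p (v k) y| + |σ (v k y) * ξ k y| := abs_add_le _ _
            _ ≤ B + (|σ 0| + Lipσ * B) * Cξ := by
                have h1 := htrans_bd _ B hBv y
                have h2 : |σ (v k y) * ξ k y| ≤ (|σ 0| + Lipσ * B) * Cξ := by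
                  rw [abs_mul]
                  exact mul_le_mul hσv (hCξ k y) (abs_nonneg _) hσnn
                linarith
      · intro z
        have hwnn : 0 ≤ u k z - v k z := sub_nonneg.2 (hle z)
        have hSw : Summable (fun y => p (y - z) * (u k y - v k y)) := by
          have := (hSu z).sub (hSv z)
          simpa [mul_sub] using this
        have hdiff : transOp p (u k) z - transOp p (v k) z
            = ∑' y, p (y - z) * (u k y - v k y) := by
          rw [transOp, transOp, ← Summable.tsum_sub (hSu z) (hSv z)]
          congr 1
          funext y
          ring
        have hge : p 0 * (u k z - v k z) ≤ ∑' y, p (y - z) * (u k y - v k y) := by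
          have h1 := Summable.le_tsum hSw z (fun y _ =>
            mul_nonneg (hp_nonneg _) (sub_nonneg.2 (hle y)))
          simpa using h1
        have hnoise : -(Lipσ * (u k z - v k z) * Cξ)
            ≤ (σ (u k z) - σ (v k z)) * ξ k z := by
          have habs : |(σ (u k z) - σ (v k z)) * ξ k z|
              ≤ Lipσ * (u k z - v k z) * Cξ := by
            rw [abs_mul]
            have h1 := hLip (u k z) (v k z)
            rw [abs_of_nonneg hwnn] at h1
            exact mul_le_mul h1 (hCξ k z) (abs_nonneg _)
              (mul_nonneg hLip0 hwnn)
          have h2 := neg_abs_le ((σ (u k z) - σ (v k z)) * ξ k z)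
          linarith
        have hkey : Cξ * Lipσ * (u k z - v k z) ≤ p 0 * (u k z - v k z) :=
          mul_le_mul_of_nonneg_right hcomp hwnn
        rw [hu_rec, hv_rec]
        nlinarith [hge, hnoise, hkey]
  exact fun n x => (key n).2 x
end
end
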